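/- In sequence form: let α ∈ [0,1], m ∈ ℕ, suppose Σ_k ⟨k⟩^{−2mα}|V̂(k)|² < ∞ and Σ_k ⟨k⟩^{2m}|û(k)|² < ∞, and suppose the sequence w(k) := |k|^{2m}û(k) + (V̂ * û)(k) is in ℓ²(ℤ). Then Σ_k ⟨k⟩^{2m(2−α)}|û(k)|² < ∞. -/

import Mathlib

/-! With `⟨k⟩ = 1 + |k|` and `s = m α`: bounding `⟨k⟩^{-s} ‖V̂ * û‖` by Cauchy–Schwarz against a
kernel that is square summable on `ℤ × ℤ` (because `⟨k - j⟩ ≤ ⟨k⟩ + ⟨j⟩`, `s ≤ m` and `2m > 1`)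
puts `⟨k⟩^{-s} (V̂ * û)` in `ℓ²`. Then `|k|^{2m} û = w - V̂ * û` puts `⟨k⟩^{-s} |k|^{2m} û` in `ℓ²`,
and since `⟨k⟩^{2m} ≤ 2^{2m-1} (1 + |k|^{2m})`, so is `⟨k⟩^{2m-s} û`, whose square is the
weighted sequence of the claim. -/

noncomputable section
open Complex

def conv (a b : ℤ → ℂ) (k : ℤ) : ℂ := ∑' j : ℤ, a (k - j) * b j

section SquareSummable

variable {ι : Type*}

theorem summable_sq_add {f g : ι → ℝ} (hf : Summable fun i => f i ^ 2)
    (hg : Summable fun i => g i ^ 2) : Summable fun i => (f i + g i) ^ 2 :=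
  Summable.of_nonneg_of_le (fun _ => sq_nonneg _)
    (fun i => by nlinarith [sq_nonneg (f i - g i)]) ((hf.add hg).mul_left 2)

theorem Summable.sq_of_le_mul {f g : ι → ℝ} {c : ℝ} (hg : Summable fun i => g i ^ 2)
    (hf0 : ∀ i, 0 ≤ f i) (hfg : ∀ i, f i ≤ c * g i) : Summable fun i => f i ^ 2 :=
  Summable.of_nonneg_of_le (fun _ => sq_nonneg _)
    (fun i => (pow_le_pow_left₀ (hf0 i) (hfg i) 2).trans_eq (mul_pow c (g i) 2))
    (hg.mul_left (c ^ 2))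

theorem Summable.sq_of_le {f g : ι → ℝ} (hg : Summable fun i => g i ^ 2)
    (hf0 : ∀ i, 0 ≤ f i) (hfg : ∀ i, f i ≤ g i) : Summable fun i => f i ^ 2 :=
  hg.sq_of_le_mul (c := 1) hf0 fun i => (hfg i).trans_eq (one_mul _).symm

theorem tsum_mul_sq_le {f g : ι → ℝ} (hf0 : ∀ i, 0 ≤ f i) (hg0 : ∀ i, 0 ≤ g i)
    (hf : Summable fun i => f i ^ 2) (hg : Summable fun i => g i ^ 2) :
    (∑' i, f i * g i) ^ 2 ≤ (∑' i, f i ^ 2) * ∑' i, g i ^ 2 := by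
  have hCS := Real.inner_le_Lp_mul_Lq_tsum_of_nonneg .two_two hf0 hg0
    (by simpa only [Real.rpow_two] using hf) (by simpa only [Real.rpow_two] using hg)
  simp only [Real.rpow_two, ← Real.sqrt_eq_rpow] at hCS
  calc (∑' i, f i * g i) ^ 2
      ≤ (√(∑' i, f i ^ 2) * √(∑' i, g i ^ 2)) ^ 2 :=
        pow_le_pow_left₀ (tsum_nonneg fun i => mul_nonneg (hf0 i) (hg0 i)) hCS 2
    _ = (∑' i, f i ^ 2) * ∑' i, g i ^ 2 := by
        rw [mul_pow, Real.sq_sqrt (tsum_nonneg fun _ => sq_nonneg _),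
          Real.sq_sqrt (tsum_nonneg fun _ => sq_nonneg _)]

theorem summable_sq_tsum_mul_of_summable_sq {κ : Type*} {K : ι → κ → ℝ} {B : κ → ℝ}
    (hK0 : ∀ i j, 0 ≤ K i j) (hB0 : ∀ j, 0 ≤ B j)
    (hK : Summable fun p : ι × κ => K p.1 p.2 ^ 2) (hB : Summable fun j => B j ^ 2) :
    Summable fun i => (∑' j, K i j * B j) ^ 2 := by
  obtain ⟨hrows, hrowsum⟩ := (summable_prod_of_nonneg fun p => sq_nonneg (K p.1 p.2)).mp hK
  exact Summable.of_nonneg_of_le (fun _ => sq_nonneg _)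
    (fun i => tsum_mul_sq_le (hK0 i) hB0 (hrows i) hB) (hrowsum.mul_right _)

end SquareSummable

section Shear

variable {G : Type*} [AddCommGroup G] {f h : G → ℝ}

theorem summable_sq_comp_sub_mul_snd (hf : Summable fun x => f x ^ 2)
    (hh : Summable fun x => h x ^ 2) :
    Summable fun p : G × G => (f (p.1 - p.2) * h p.2) ^ 2 := by
  let e : G × G ≃ G × G :=
    ⟨fun p => (p.1 - p.2, p.2), fun p => (p.1 + p.2, p.2), fun p => by simp, fun p => by simp⟩
  refine (e.summable_iff.mpr
    (hf.mul_of_nonneg hh (fun _ => sq_nonneg _) fun _ => sq_nonneg _)).congr fun p => ?_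
  simp only [e, Function.comp_apply, Equiv.coe_fn_mk, mul_pow]

theorem summable_sq_comp_sub_mul_fst (hf : Summable fun x => f x ^ 2)
    (hh : Summable fun x => h x ^ 2) :
    Summable fun p : G × G => (f (p.1 - p.2) * h p.1) ^ 2 := by
  let e : G × G ≃ G × G :=
    ⟨fun p => (p.1 - p.2, p.1), fun p => (p.2, p.2 - p.1), fun p => by simp, fun p => by simp⟩
  refine (e.summable_iff.mpr
    (hf.mul_of_nonneg hh (fun _ => sq_nonneg _) fun _ => sq_nonneg _)).congr fun p => ?_
  simp only [e, Function.comp_apply, Equiv.coe_fn_mk, mul_pow]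

end Shear

theorem norm_tsum_le_tsum_norm_of_finiteDimensional {ι E : Type*} [NormedAddCommGroup E]
    [NormedSpace ℝ E] [FiniteDimensional ℝ E] (f : ι → E) : ‖∑' i, f i‖ ≤ ∑' i, ‖f i‖ := by
  by_cases hf : Summable fun i => ‖f i‖
  · exact norm_tsum_le_tsum_norm hf
  · rw [tsum_eq_zero_of_not_summable (summable_norm_iff.not.mp hf), norm_zero]
    exact tsum_nonneg fun _ => norm_nonneg _

/-- The kernel bound behind the convolution estimate, with `x, y, z` in the roles of
`⟨k⟩, ⟨j⟩, ⟨k - j⟩`. -/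
theorem rpow_mul_rpow_neg_mul_rpow_neg_le {x y z s m : ℝ} (hx : 0 < x) (hy : 0 < y)
    (hz : 0 ≤ z) (hzxy : z ≤ x + y) (hs : 0 ≤ s) (hsm : s ≤ m) :
    z ^ s * x ^ (-s) * y ^ (-m) ≤ 2 ^ s * (x ^ (-m) + y ^ (-m)) := by
  have hpow {t : ℝ} (ht : 0 < t) (hzt : z ≤ 2 * t) : z ^ s * t ^ (-s) ≤ 2 ^ s := by
    calc z ^ s * t ^ (-s) ≤ (2 * t) ^ s * t ^ (-s) := by gcongr
      _ = 2 ^ s := by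
        rw [Real.mul_rpow zero_le_two ht.le, mul_assoc, ← Real.rpow_add ht, add_neg_cancel,
          Real.rpow_zero, mul_one]
  rcases le_total y x with hyx | hxy
  · calc z ^ s * x ^ (-s) * y ^ (-m) ≤ 2 ^ s * y ^ (-m) := by
          gcongr; exact hpow hx (by linarith)
      _ ≤ 2 ^ s * (x ^ (-m) + y ^ (-m)) := by
          gcongr; exact le_add_of_nonneg_left (by positivity)
  · -- `y ^ (s - m) ≤ x ^ (s - m)` trades the decay in `y` for decay in `x`
    calc z ^ s * x ^ (-s) * y ^ (-m) = z ^ s * y ^ (-s) * (x ^ (-s) * y ^ (s - m)) := by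
          rw [Real.rpow_sub hy, Real.rpow_neg hy.le, Real.rpow_neg hy.le]
          field_simp
      _ ≤ 2 ^ s * (x ^ (-s) * x ^ (s - m)) :=
          mul_le_mul (hpow hy (by linarith)) (mul_le_mul_of_nonneg_left
            (Real.rpow_le_rpow_of_nonpos hx hxy (by linarith)) (by positivity))
            (by positivity) (by positivity)
      _ = 2 ^ s * x ^ (-m) := by rw [← Real.rpow_add hx]; ring_nf
      _ ≤ 2 ^ s * (x ^ (-m) + y ^ (-m)) := by
          gcongr; exact le_add_of_nonneg_right (by positivity)

local notation "⟪" k "⟫" => (1 + |((k : ℤ) : ℝ)|)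

theorem one_le_bracket (k : ℤ) : 1 ≤ ⟪k⟫ :=
  le_add_of_nonneg_right (abs_nonneg _)

theorem bracket_pos (k : ℤ) : 0 < ⟪k⟫ :=
  one_pos.trans_le (one_le_bracket k)

theorem bracket_sub_le (k j : ℤ) : ⟪k - j⟫ ≤ ⟪k⟫ + ⟪j⟫ := by
  push_cast
  linarith [abs_sub (k : ℝ) j]

theorem sq_bracket_rpow_mul (k : ℤ) (a t : ℝ) :
    (⟪k⟫ ^ a * t) ^ 2 = ⟪k⟫ ^ (2 * a) * t ^ 2 := by
  rw [mul_pow, mul_comm 2 a, ← Real.rpow_mul_natCast (bracket_pos k).le a 2, Nat.cast_ofNat]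

theorem summable_sq_bracket_rpow_neg {m : ℝ} (hm : 1 < 2 * m) :
    Summable fun k => (⟪k⟫ ^ (-m)) ^ 2 := by
  refine Summable.of_norm_bounded_eventually (Real.summable_abs_int_rpow hm) ?_
  filter_upwards [Filter.eventually_cofinite_ne 0] with k hk
  rw [Real.norm_of_nonneg (by positivity), ← mul_one (⟪k⟫ ^ (-m)),
    sq_bracket_rpow_mul, one_pow, mul_one, mul_neg]
  exact Real.rpow_le_rpow_of_nonpos (abs_pos.mpr (Int.cast_ne_zero.mpr hk))
    (le_add_of_nonneg_left zero_le_one) (by linarith)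

theorem summable_sq_bracket_rpow_neg_mul_norm_conv {s m : ℝ} (hs : 0 ≤ s) (hsm : s ≤ m)
    (hm : 1 < 2 * m) {V u : ℤ → ℂ} (hV : Summable fun k => (⟪k⟫ ^ (-s) * ‖V k‖) ^ 2)
    (hu : Summable fun k => (⟪k⟫ ^ m * ‖u k‖) ^ 2) :
    Summable fun k => (⟪k⟫ ^ (-s) * ‖conv V u k‖) ^ 2 := by
  set A : ℤ → ℝ := fun i => ⟪i⟫ ^ (-s) * ‖V i‖
  set K : ℤ → ℤ → ℝ := fun k j => ⟪k⟫ ^ (-s) * ‖V (k - j)‖ * ⟪j⟫ ^ (-m)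
  have hK : Summable fun p : ℤ × ℤ => K p.1 p.2 ^ 2 := by
    refine (summable_sq_add (summable_sq_comp_sub_mul_fst hV (summable_sq_bracket_rpow_neg hm))
      (summable_sq_comp_sub_mul_snd hV (summable_sq_bracket_rpow_neg hm))).sq_of_le_mul
      (c := 2 ^ s) (fun _ => by simp only [K]; positivity) fun ⟨k, j⟩ => ?_
    have hA : ⟪k - j⟫ ^ s * A (k - j) = ‖V (k - j)‖ := by
      rw [← mul_assoc, ← Real.rpow_add (bracket_pos _), add_neg_cancel, Real.rpow_zero, one_mul]
    calc K k j = A (k - j) * (⟪k - j⟫ ^ s * ⟪k⟫ ^ (-s) * ⟪j⟫ ^ (-m)) := by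
          simp only [K, ← hA]; ring
      _ ≤ A (k - j) * (2 ^ s * (⟪k⟫ ^ (-m) + ⟪j⟫ ^ (-m))) :=
          mul_le_mul_of_nonneg_left (rpow_mul_rpow_neg_mul_rpow_neg_le (bracket_pos k)
            (bracket_pos j) (bracket_pos _).le (bracket_sub_le k j) hs hsm)
            (by simp only [A]; positivity)
      _ = _ := by ring
  refine (summable_sq_tsum_mul_of_summable_sq (fun _ _ => by positivity)
    (fun _ => by positivity) hK hu).sq_of_le (fun _ => by positivity) fun k => ?_
  have hKB (j : ℤ) : K k j * (⟪j⟫ ^ m * ‖u j‖)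
      = ⟪k⟫ ^ (-s) * (‖V (k - j)‖ * ‖u j‖) := by
    have hj : ⟪j⟫ ^ (-m) * ⟪j⟫ ^ m = 1 := by
      rw [← Real.rpow_add (bracket_pos j), neg_add_cancel, Real.rpow_zero]
    linear_combination (⟪k⟫ ^ (-s) * ‖V (k - j)‖ * ‖u j‖) * hj
  calc ⟪k⟫ ^ (-s) * ‖conv V u k‖
      ≤ ⟪k⟫ ^ (-s) * ∑' j, ‖V (k - j) * u j‖ := by
        gcongr; exact norm_tsum_le_tsum_norm_of_finiteDimensional _
    _ = ∑' j, K k j * (⟪j⟫ ^ m * ‖u j‖) := by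
        simp only [hKB, norm_mul, tsum_mul_left]

theorem summable_sq_bracket_rpow_add_mul {n : ℕ} {s : ℝ} {a : ℤ → ℝ} (ha : ∀ k, 0 ≤ a k)
    (h₀ : Summable fun k => (⟪k⟫ ^ s * a k) ^ 2)
    (hn : Summable fun k => (⟪k⟫ ^ s * (|(k : ℝ)| ^ n * a k)) ^ 2) :
    Summable fun k => (⟪k⟫ ^ (n + s) * a k) ^ 2 := by
  refine (summable_sq_add h₀ hn).sq_of_le_mul (c := 2 ^ (n - 1)) (fun k => ?_) fun k => ?_
  · have := ha k; positivity
  · have hpow : ⟪k⟫ ^ n ≤ 2 ^ (n - 1) * (1 + |(k : ℝ)| ^ n) := by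
      simpa only [one_pow] using add_pow_le zero_le_one (abs_nonneg (k : ℝ)) n
    calc ⟪k⟫ ^ ((n : ℝ) + s) * a k = ⟪k⟫ ^ s * (⟪k⟫ ^ n * a k) := by
          rw [Real.rpow_add (bracket_pos k), Real.rpow_natCast]; ring
      _ ≤ ⟪k⟫ ^ s * (2 ^ (n - 1) * (1 + |(k : ℝ)| ^ n) * a k) := by
          have := ha k; gcongr
      _ = 2 ^ (n - 1) * (⟪k⟫ ^ s * a k + ⟪k⟫ ^ s * (|(k : ℝ)| ^ n * a k)) := by
          ring

theorem mul_mul_norm_le_norm_add_mul_norm {t r : ℝ} (ht0 : 0 ≤ t) (ht1 : t ≤ 1) (hr : 0 ≤ r)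
    (x y : ℂ) : t * (r * ‖x‖) ≤ ‖(r : ℂ) * x + y‖ + t * ‖y‖ := by
  have hrx : r * ‖x‖ ≤ ‖(r : ℂ) * x + y‖ + ‖y‖ := by
    simpa only [norm_mul, Complex.norm_real, Real.norm_of_nonneg hr] using
      norm_le_add_norm_add ((r : ℂ) * x) y
  calc t * (r * ‖x‖) ≤ t * (‖(r : ℂ) * x + y‖ + ‖y‖) := by gcongr
    _ ≤ ‖(r : ℂ) * x + y‖ + t * ‖y‖ := by
        nlinarith [norm_nonneg ((r : ℂ) * x + y)]

theorem regularity_seq (m : ℕ) (hm : 1 ≤ m) (α : ℝ) (hα0 : 0 ≤ α) (hα1 : α ≤ 1)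
    (V u : ℤ → ℂ)
    (hV : Summable fun k : ℤ => ((1 + |k| : ℝ)) ^ (-(2 * m * α)) * ‖V k‖ ^ 2)
    (hu : Summable fun k : ℤ => ((1 + |k| : ℝ)) ^ (2 * m : ℝ) * ‖u k‖ ^ 2)
    (hw : Summable fun k : ℤ =>
      ‖(|(k : ℝ)| ^ (2 * m) : ℝ) * u k + conv V u k‖ ^ 2) :
    Summable fun k : ℤ => ((1 + |k| : ℝ)) ^ (2 * m * (2 - α)) * ‖u k‖ ^ 2 := by
  simp only [Int.cast_abs] at hV hu ⊢
  have hs : 0 ≤ (m : ℝ) * α := by positivity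
  have hV' : Summable fun k => (⟪k⟫ ^ (-(m * α)) * ‖V k‖) ^ 2 :=
    hV.congr fun k => by rw [sq_bracket_rpow_mul]; ring_nf
  have hu' : Summable fun k => (⟪k⟫ ^ (m : ℝ) * ‖u k‖) ^ 2 :=
    hu.congr fun k => by rw [sq_bracket_rpow_mul]
  have hc := summable_sq_bracket_rpow_neg_mul_norm_conv hs
    (mul_le_of_le_one_right (Nat.cast_nonneg m) hα1) (by norm_cast; omega) hV' hu'
  have hu₀ : Summable fun k => (⟪k⟫ ^ (-(m * α)) * ‖u k‖) ^ 2 :=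
    hu'.sq_of_le (fun _ => by positivity) fun k => by
      gcongr
      · exact one_le_bracket k
      · linarith [m.cast_nonneg (α := ℝ)]
  have hku := (summable_sq_add hw hc).sq_of_le (fun _ => by positivity) fun k =>
    mul_mul_norm_le_norm_add_mul_norm (by positivity)
      (Real.rpow_le_one_of_one_le_of_nonpos (one_le_bracket k) (by linarith)) (by positivity)
      (u k) (conv V u k)
  refine (summable_sq_bracket_rpow_add_mul (fun k => norm_nonneg (u k)) hu₀ hku).congr
    fun k => ?_
  rw [sq_bracket_rpow_mul]; push_cast; ring_nf
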